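/- Let X = {(2^m, 2^k) : m, k ∈ ℤ, m ≥ 0, k ≥ 0} ⊆ ℕ². Fix D ∈ ℕ and set x₀ = Σ_{i=D+1}^{2D+1} 2^i. Then for all integers j, k with 1 ≤ j ≤ D and 1 ≤ k ≤ D, the point (x₀ + j, 1 + k) does not belong to FS(X). -/

import Mathlib

/-
Every element of `X` has first coordinate a power of two and second coordinate at least `1`, so
a point `(a, c)` of `FS(X)` is a sum of at most `c` powers of two, and hence the binary digit sum
of `a` is at most `c`, by subadditivity of digit sums (a consequence of Legendre's formula, since
`a! b!` divides `(a + b)!`). But `x₀ + j` is the concatenation of `D + 1` binary ones with the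
binary expansion of `j ≥ 1`, so its digit sum is at least `D + 2 > 1 + k`.
-/

open scoped BigOperators

/-- `FS X` is the set of all sums of finitely many distinct elements of `X`
(sums over finite nonempty subsets of `X`). -/
def FS {α : Type*} [AddCommMonoid α] (X : Set α) : Set α :=
  {s | ∃ F : Finset α, F.Nonempty ∧ ↑F ⊆ X ∧ s = ∑ x ∈ F, x}

/-- `X = {(2^m, 2^k) : m, k ≥ 0}`. -/
def X2 : Set (ℕ × ℕ) := {p | ∃ m k : ℕ, p = (2 ^ m, 2 ^ k)}

open Finset

namespace Nat

theorem digit_sum_add_le (p : ℕ) [Fact p.Prime] (a b : ℕ) :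
    (p.digits (a + b)).sum ≤ (p.digits a).sum + (p.digits b).sum := by
  have hval : padicValNat p a ! + padicValNat p b ! ≤ padicValNat p (a + b)! := by
    rw [← padicValNat.mul (factorial_ne_zero a) (factorial_ne_zero b),
      ← padicValNat_dvd_iff_le (factorial_ne_zero _)]
    exact pow_padicValNat_dvd.trans (factorial_mul_factorial_dvd_factorial_add a b)
  have hlegendre := Nat.mul_le_mul_left (p - 1) hval
  rw [mul_add, sub_one_mul_padicValNat_factorial, sub_one_mul_padicValNat_factorial,
    sub_one_mul_padicValNat_factorial] at hlegendre
  have ha := digit_sum_le p a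
  have hb := digit_sum_le p b
  have hab := digit_sum_le p (a + b)
  omega

theorem digit_sum_sum_le (p : ℕ) [Fact p.Prime] {ι : Type*} (s : Finset ι) (f : ι → ℕ) :
    (p.digits (∑ i ∈ s, f i)).sum ≤ ∑ i ∈ s, (p.digits (f i)).sum :=
  le_sum_of_subadditive (fun n ↦ (p.digits n).sum) (by simp) (digit_sum_add_le p) s f

theorem digit_sum_pos (b : ℕ) {n : ℕ} (hn : n ≠ 0) : 0 < (b.digits n).sum :=
  (pos_of_ne_zero (getLast_digit_ne_zero b hn)).trans_le (List.le_sum_of_mem (List.getLast_mem _))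

theorem digit_sum_base_pow {b : ℕ} (hb : 1 < b) (k : ℕ) : (b.digits (b ^ k)).sum = 1 := by
  simpa [digits_of_lt b 1 one_ne_zero hb] using
    congrArg List.sum (digits_base_pow_mul (k := k) hb one_pos)

theorem digit_sum_add_base_pow_mul {b n k : ℕ} (hb : 1 < b) (hn : n < b ^ k) (m : ℕ) :
    (b.digits (n + b ^ k * m)).sum = (b.digits n).sum + (b.digits m).sum := by
  rcases m.eq_zero_or_pos with rfl | hm
  · simp
  have hlen : (b.digits n).length ≤ k := (digits_length_le_iff hb n).2 hn
  rw [← Nat.add_sub_cancel' hlen, ← digits_append_zeroes_append_digits hb hm]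
  simp

theorem digit_sum_geom_sum {b : ℕ} (hb : 1 < b) (n : ℕ) :
    (b.digits (∑ i ∈ range n, b ^ i)).sum = n := by
  induction n with
  | zero => simp
  | succ n ih =>
    have hlt : ∑ i ∈ range n, b ^ i < b ^ n := Nat.geomSum_lt hb (fun i hi ↦ mem_range.1 hi)
    rw [sum_range_succ, ← mul_one (b ^ n), digit_sum_add_base_pow_mul hb hlt,
      ih, digits_of_lt b 1 one_ne_zero hb, List.sum_singleton]

end Nat

theorem digit_sum_fst_le_snd_of_mem_FS_X2 {a c : ℕ} (h : (a, c) ∈ FS X2) :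
    (Nat.digits 2 a).sum ≤ c := by
  obtain ⟨F, -, hFX, hsum⟩ := h
  have hF : ∀ x ∈ F, (Nat.digits 2 x.1).sum = 1 ∧ 1 ≤ x.2 := by
    intro x hx
    obtain ⟨m, n, rfl⟩ := hFX hx
    exact ⟨Nat.digit_sum_base_pow one_lt_two m, Nat.one_le_two_pow⟩
  calc (Nat.digits 2 a).sum = (Nat.digits 2 (∑ x ∈ F, x.1)).sum := by rw [← Prod.fst_sum, ← hsum]
    _ ≤ ∑ x ∈ F, (Nat.digits 2 x.1).sum := Nat.digit_sum_sum_le 2 F _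
    _ = #F := by rw [sum_congr rfl fun x hx ↦ (hF x hx).1, sum_const, smul_eq_mul, mul_one]
    _ ≤ ∑ x ∈ F, x.2 := by simpa using card_nsmul_le_sum F _ 1 fun x hx ↦ (hF x hx).2
    _ = c := by rw [← Prod.snd_sum, ← hsum]

theorem stmt_7_general (D : ℕ) (x₀ : ℕ)
    (hx₀ : x₀ = ∑ i ∈ Finset.Icc (D + 1) (2 * D + 1), 2 ^ i)
    (j k : ℕ) (hj1 : 1 ≤ j) (hjD : j ≤ D) (hkD : k ≤ D) :
    (x₀ + j, 1 + k) ∉ FS X2 := by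
  have hx₀_eq : x₀ = 2 ^ (D + 1) * ∑ i ∈ range (D + 1), 2 ^ i := by
    rw [hx₀, ← Ico_add_one_right_eq_Icc, sum_Ico_eq_sum_range, mul_sum,
      show 2 * D + 1 + 1 - (D + 1) = D + 1 by omega]
    simp only [pow_add]
  have hj : j < 2 ^ (D + 1) :=
    Nat.lt_two_pow_self.trans_le (Nat.pow_le_pow_right two_pos (by omega))
  have hdigits : (Nat.digits 2 (x₀ + j)).sum = (Nat.digits 2 j).sum + (D + 1) := by
    rw [hx₀_eq, add_comm, Nat.digit_sum_add_base_pow_mul one_lt_two hj,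
      Nat.digit_sum_geom_sum one_lt_two]
  have hj_digits : 0 < (Nat.digits 2 j).sum := Nat.digit_sum_pos 2 (by omega)
  intro h
  have hFS := digit_sum_fst_le_snd_of_mem_FS_X2 h
  omega

/-- With `x₀ = Σ_{i=D+1}^{2D+1} 2^i`, no point `(x₀ + j, 1 + k)` with `1 ≤ j,k ≤ D`
belongs to `FS(X)`. -/
theorem stmt_7 (D : ℕ) (hD : 1 ≤ D) (x₀ : ℕ)
    (hx₀ : x₀ = ∑ i ∈ Finset.Icc (D + 1) (2 * D + 1), 2 ^ i)
    (j k : ℕ) (hj1 : 1 ≤ j) (hjD : j ≤ D) (hk1 : 1 ≤ k) (hkD : k ≤ D) :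
    (x₀ + j, 1 + k) ∉ FS X2 :=
  stmt_7_general D x₀ hx₀ j k hj1 hjD hkD
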